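/- Let μ > 0, F ∈ ℝ², and 0 < a < b. Let u_δ(x) = (1/(4πμ))·(−ln|x|·F + ((x·F)/|x|²)·x) and p_δ(x) = (1/(2π))·(x·F)/|x|² be the 2D Stokeslet, and let χ̃(x) = χ(|x|) with χ(r) = (2r³ − 3(a+b)r² + 6abr + b²(b−3a))/(b−a)³ for a ≤ r ≤ b. Then for every x ∈ ℝ² with a < |x| < b, writing r = |x|: −μ·Δ(χ̃·u_δ)(x) + ∇(χ̃·p_δ)(x) = [3 / (2π(b−a)³ r)] · ( [ (3r² − 2(a+b)r + ab)·ln r + 2r² − 2(a+b)r + 2ab ]·F + (ab − r²)·((x·F)/r²)·x ). -/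

import Mathlib

/-!
On the annulus `χ̃` is a cubic in `r = |x|`, and both `χ̃ u_δ` and `χ̃ p_δ` are radial profiles
times polynomials: `χ̃ u_δ = φ(r) F + ψ(r) (x·F) x` and `χ̃ p_δ = θ(r) (x·F)`. Since
`∂ᵢ φ(r) = φ'(r) xᵢ / r`, the Laplacian of such a field in `ℝᵈ` is again of this shape,
`(φ'' + (d-1) φ'/r + 2ψ) F + (ψ'' + (d+3) ψ'/r) (x·F) x`, so the Stokes operator reduces to an
identity between one-variable functions of `r`, checked by algebra for the explicit cubic.
-/

open Real MeasureTheory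

noncomputable section

/-- Euclidean inner product on `Fin d → ℝ`. -/
def dot {d : ℕ} (x y : Fin d → ℝ) : ℝ := ∑ i, x i * y i

/-- Euclidean norm on `Fin d → ℝ`. -/
def eunorm {d : ℕ} (x : Fin d → ℝ) : ℝ := Real.sqrt (∑ i, (x i) ^ 2)

/-- `i`-th partial derivative of a scalar field. -/
def pd {d : ℕ} (i : Fin d) (f : (Fin d → ℝ) → ℝ) (x : Fin d → ℝ) : ℝ :=
  fderiv ℝ f x (Pi.single i 1)

/-- Laplacian (sum of second partial derivatives) of a scalar field. -/
def lap {d : ℕ} (f : (Fin d → ℝ) → ℝ) (x : Fin d → ℝ) : ℝ :=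
  ∑ i, pd i (fun y => pd i f y) x

/-- Divergence of a vector field. -/
def divg {d : ℕ} (u : (Fin d → ℝ) → (Fin d → ℝ)) (x : Fin d → ℝ) : ℝ :=
  ∑ i, pd i (fun y => u y i) x

/-- 2D Stokeslet velocity. -/
def udelta2 (μ : ℝ) (F : Fin 2 → ℝ) (x : Fin 2 → ℝ) : Fin 2 → ℝ :=
  fun j => (1 / (4 * π * μ)) *
    ((- Real.log (eunorm x)) * F j + (dot x F / (eunorm x) ^ 2) * x j)

/-- 2D Stokeslet pressure. -/
def pdelta2 (F : Fin 2 → ℝ) (x : Fin 2 → ℝ) : ℝ :=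
  (1 / (2 * π)) * (dot x F / (eunorm x) ^ 2)

/-- The radial cubic cutoff profile: `1` for `r ≤ a`, a cubic polynomial on `[a, b]`,
and `0` for `r ≥ b`. -/
def cutoff (a b r : ℝ) : ℝ :=
  if r ≤ a then 1
  else if r ≤ b then
    (2 * r ^ 3 - 3 * (a + b) * r ^ 2 + 6 * a * b * r + b ^ 2 * (b - 3 * a)) / (b - a) ^ 3
  else 0


open Filter Topology

section PartialDerivative

variable {d : ℕ} {f g : (Fin d → ℝ) → ℝ} {y : Fin d → ℝ}

lemma pd_congr (i : Fin d) (h : f =ᶠ[𝓝 y] g) : pd i f y = pd i g y := by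
  rw [pd, pd, h.fderiv_eq]

lemma lap_congr (h : f =ᶠ[𝓝 y] g) : lap f y = lap g y := by
  refine Finset.sum_congr rfl fun i _ => pd_congr i ?_
  filter_upwards [h.fderiv (𝕜 := ℝ)] with z hz
  rw [pd, pd, hz]

lemma pd_add (i : Fin d) (hf : DifferentiableAt ℝ f y) (hg : DifferentiableAt ℝ g y) :
    pd i (fun z => f z + g z) y = pd i f y + pd i g y := by
  have h : HasFDerivAt (fun z => f z + g z) (fderiv ℝ f y + fderiv ℝ g y) y :=
    hf.hasFDerivAt.add hg.hasFDerivAt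
  rw [pd, h.fderiv]
  rfl

lemma pd_mul (i : Fin d) (hf : DifferentiableAt ℝ f y) (hg : DifferentiableAt ℝ g y) :
    pd i (fun z => f z * g z) y = pd i f y * g y + f y * pd i g y := by
  have h : HasFDerivAt (fun z => f z * g z) (f y • fderiv ℝ g y + g y • fderiv ℝ f y) y :=
    hf.hasFDerivAt.mul hg.hasFDerivAt
  rw [pd, h.fderiv, pd, pd]
  simp only [FunLike.coe_add, FunLike.coe_smul, Pi.add_apply, Pi.smul_apply, smul_eq_mul]
  ring

lemma pd_const (i : Fin d) (c : ℝ) : pd i (fun _ => c) y = 0 := by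
  simp [pd]

lemma pd_apply (i k : Fin d) : pd i (fun z => z k) y = Pi.single (M := fun _ => ℝ) i 1 k := by
  simp [pd, fderiv_apply]

@[fun_prop]
lemma differentiable_dot (F : Fin d → ℝ) : Differentiable ℝ (fun z : Fin d → ℝ => dot z F) := by
  unfold dot
  fun_prop

lemma pd_dot (i : Fin d) (F : Fin d → ℝ) : pd i (fun z => dot z F) y = F i := by
  have h : HasFDerivAt (fun z : Fin d → ℝ => dot z F)
      (∑ k, F k • ContinuousLinearMap.proj (R := ℝ) (φ := fun _ : Fin d => ℝ) k) y :=
    HasFDerivAt.fun_sum fun k _ => (hasFDerivAt_apply k y).mul_const (F k)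
  rw [pd, h.fderiv]
  simp [Pi.single_apply]

lemma pd_comp_of_hasDerivAt (i : Fin d) {φ : ℝ → ℝ} {φ' : ℝ} (hφ : HasDerivAt φ φ' (f y))
    (hf : DifferentiableAt ℝ f y) : pd i (fun z => φ (f z)) y = φ' * pd i f y := by
  have h : HasFDerivAt (fun z => φ (f z)) (φ' • fderiv ℝ f y) y :=
    hφ.comp_hasFDerivAt y hf.hasFDerivAt
  rw [pd, h.fderiv]
  rfl

end PartialDerivative

section Radial

variable {d : ℕ} {g : (Fin d → ℝ) → ℝ} {y : Fin d → ℝ}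

lemma eunorm_sq (y : Fin d → ℝ) : eunorm y ^ 2 = ∑ i, y i ^ 2 :=
  Real.sq_sqrt (by positivity)

lemma eunorm_pos (hy : y ≠ 0) : 0 < eunorm y := by
  obtain ⟨i, hi : y i ≠ 0⟩ := Function.ne_iff.mp hy
  exact Real.sqrt_pos.mpr <| Finset.sum_pos' (fun k _ => sq_nonneg (y k))
    ⟨i, Finset.mem_univ i, by positivity⟩

lemma continuous_eunorm : Continuous (eunorm : (Fin d → ℝ) → ℝ) := by
  unfold eunorm
  fun_prop

lemma hasFDerivAt_sum_sq (y : Fin d → ℝ) :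
    HasFDerivAt (fun z : Fin d → ℝ => ∑ k, z k ^ 2)
      (∑ k, (2 * y k) • ContinuousLinearMap.proj (R := ℝ) (φ := fun _ : Fin d => ℝ) k) y :=
  HasFDerivAt.fun_sum fun k _ => by simpa using (hasFDerivAt_apply (𝕜 := ℝ) k y).pow 2

lemma hasFDerivAt_eunorm (hy : y ≠ 0) :
    HasFDerivAt eunorm ((1 / (2 * eunorm y)) •
      ∑ k, (2 * y k) • ContinuousLinearMap.proj (R := ℝ) (φ := fun _ : Fin d => ℝ) k) y :=
  (hasFDerivAt_sum_sq y).sqrt (by simpa [← eunorm_sq] using (eunorm_pos hy).ne')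

lemma differentiableAt_eunorm (hy : y ≠ 0) : DifferentiableAt ℝ eunorm y :=
  (hasFDerivAt_eunorm hy).differentiableAt

lemma pd_eunorm (i : Fin d) (hy : y ≠ 0) : pd i eunorm y = y i / eunorm y := by
  rw [pd, (hasFDerivAt_eunorm hy).fderiv]
  simp [Pi.single_apply]
  field_simp

lemma pd_radial (i : Fin d) {φ : ℝ → ℝ} {φ' : ℝ} (hφ : HasDerivAt φ φ' (eunorm y))
    (hy : y ≠ 0) : pd i (fun z => φ (eunorm z)) y = φ' / eunorm y * y i := by
  rw [pd_comp_of_hasDerivAt i hφ (differentiableAt_eunorm hy), pd_eunorm i hy]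
  ring

lemma pd_radial_mul (i : Fin d) {φ : ℝ → ℝ} {φ' : ℝ} (hφ : HasDerivAt φ φ' (eunorm y))
    (hg : DifferentiableAt ℝ g y) (hy : y ≠ 0) :
    pd i (fun z => φ (eunorm z) * g z) y =
      φ' / eunorm y * y i * g y + φ (eunorm y) * pd i g y := by
  rw [pd_mul i (f := fun z => φ (eunorm z))
      (hφ.differentiableAt.comp y (differentiableAt_eunorm hy)) hg, pd_radial i hφ hy]

end Radial

section RadialStokesField

variable {d : ℕ} {φ φ' φ'' ψ ψ' ψ'' : ℝ → ℝ} {y : Fin d → ℝ}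

/-- The field `φ(|z|) F + ψ(|z|) (z·F) z`, shared by the Stokeslet and its radial truncations. -/
def radialStokesField (φ ψ : ℝ → ℝ) (F : Fin d → ℝ) (j : Fin d) (z : Fin d → ℝ) : ℝ :=
  φ (eunorm z) * F j + ψ (eunorm z) * (dot z F * z j)

lemma pd_radialStokesField (F : Fin d → ℝ) (i j : Fin d)
    (hφ : HasDerivAt φ (φ' (eunorm y)) (eunorm y))
    (hψ : HasDerivAt ψ (ψ' (eunorm y)) (eunorm y)) (hy : y ≠ 0) :
    pd i (radialStokesField φ ψ F j) y =
      φ' (eunorm y) / eunorm y * (y i * F j)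
        + ψ' (eunorm y) / eunorm y * (y i * (dot y F * y j))
        + ψ (eunorm y) * (F i * y j + dot y F * Pi.single (M := fun _ => ℝ) i 1 j) := by
  have := differentiableAt_eunorm hy
  have := hφ.differentiableAt
  have := hψ.differentiableAt
  unfold radialStokesField
  rw [pd_add i (by fun_prop) (by fun_prop), pd_radial_mul i hφ (by fun_prop) hy,
    pd_radial_mul i hψ (by fun_prop) hy]
  simp (disch := fun_prop) only [pd_mul, pd_apply, pd_dot, pd_const]
  ring

lemma pd_pd_radialStokesField (F : Fin d → ℝ) (i j : Fin d)
    (hφ : ∀ t > 0, HasDerivAt φ (φ' t) t) (hφ' : ∀ t > 0, HasDerivAt φ' (φ'' t) t)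
    (hψ : ∀ t > 0, HasDerivAt ψ (ψ' t) t) (hψ' : ∀ t > 0, HasDerivAt ψ' (ψ'' t) t)
    (hy : y ≠ 0) :
    pd i (fun z => pd i (radialStokesField φ ψ F j) z) y =
      ((φ'' (eunorm y) - φ' (eunorm y) / eunorm y) * F j
          + (ψ'' (eunorm y) - ψ' (eunorm y) / eunorm y) * (dot y F * y j)) / eunorm y ^ 2 * y i ^ 2
        + (φ' (eunorm y) * F j + ψ' (eunorm y) * (dot y F * y j)) / eunorm y
        + 2 * ψ' (eunorm y) / eunorm y
          * (y i * F i * y j + dot y F * y i * Pi.single (M := fun _ => ℝ) i 1 j)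
        + 2 * ψ (eunorm y) * (F i * Pi.single (M := fun _ => ℝ) i 1 j) := by
  set r := eunorm y
  have hr : 0 < r := eunorm_pos hy
  have hr0 : eunorm y ≠ 0 := hr.ne'
  -- the profiles `φ'/t`, `ψ'/t` are kept as lambdas so that `pd_radial_mul` matches them
  have hfirst : (fun z => pd i (radialStokesField φ ψ F j) z) =ᶠ[𝓝 y]
      fun z => (fun t => φ' t / t) (eunorm z) * (z i * F j)
        + (fun t => ψ' t / t) (eunorm z) * (z i * (dot z F * z j))
        + ψ (eunorm z) * (F i * z j + dot z F * Pi.single (M := fun _ => ℝ) i 1 j) := by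
    filter_upwards [isOpen_ne.mem_nhds hy] with z hz
    exact pd_radialStokesField F i j (hφ _ (eunorm_pos hz)) (hψ _ (eunorm_pos hz)) hz
  have hA : HasDerivAt (fun t => φ' t / t) ((φ'' r * r - φ' r * 1) / r ^ 2) r :=
    (hφ' r hr).div (hasDerivAt_id r) hr0
  have hB : HasDerivAt (fun t => ψ' t / t) ((ψ'' r * r - ψ' r * 1) / r ^ 2) r :=
    (hψ' r hr).div (hasDerivAt_id r) hr0
  have := differentiableAt_eunorm hy
  have := (hφ' r hr).differentiableAt
  have := (hψ' r hr).differentiableAt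
  have := (hψ r hr).differentiableAt
  rw [pd_congr i hfirst, pd_add i (by fun_prop (disch := assumption)) (by fun_prop),
    pd_add i (by fun_prop (disch := assumption)) (by fun_prop (disch := assumption)),
    pd_radial_mul i hA (by fun_prop) hy, pd_radial_mul i hB (by fun_prop) hy,
    pd_radial_mul i (hψ r hr) (by fun_prop) hy]
  simp (disch := fun_prop) only [pd_add, pd_mul, pd_apply, pd_dot, pd_const, Pi.single_eq_same]
  field_simp
  ring

lemma lap_radialStokesField (F : Fin d → ℝ) (j : Fin d)
    (hφ : ∀ t > 0, HasDerivAt φ (φ' t) t) (hφ' : ∀ t > 0, HasDerivAt φ' (φ'' t) t)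
    (hψ : ∀ t > 0, HasDerivAt ψ (ψ' t) t) (hψ' : ∀ t > 0, HasDerivAt ψ' (ψ'' t) t)
    (hy : y ≠ 0) :
    lap (radialStokesField φ ψ F j) y =
      (φ'' (eunorm y) + ((d : ℝ) - 1) * φ' (eunorm y) / eunorm y + 2 * ψ (eunorm y)) * F j
        + (ψ'' (eunorm y) + ((d : ℝ) + 3) * ψ' (eunorm y) / eunorm y) * (dot y F * y j) := by
  have hr : eunorm y ≠ 0 := (eunorm_pos hy).ne'
  have hsq : ∑ i, y i ^ 2 = eunorm y ^ 2 := (eunorm_sq y).symm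
  rw [lap, Finset.sum_congr rfl fun i _ => pd_pd_radialStokesField F i j hφ hφ' hψ hψ' hy]
  simp only [Finset.sum_add_distrib, ← Finset.mul_sum, ← Finset.sum_mul, hsq, Finset.sum_const,
    Finset.card_univ, Fintype.card_fin, nsmul_eq_mul]
  simp [Pi.single_apply, dot]
  field_simp
  ring

end RadialStokesField

section TruncatedStokeslet

variable {ρ ρ' ρ'' : ℝ → ℝ} {t : ℝ}

lemma hasDerivAt_mul_log (hρ : HasDerivAt ρ (ρ' t) t) (ht : t ≠ 0) :
    HasDerivAt (fun s => ρ s * log s) (ρ' t * log t + ρ t / t) t :=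
  (hρ.mul (hasDerivAt_log ht)).congr_deriv (by ring)

lemma hasDerivAt_div_pow (n : ℕ) (hρ : HasDerivAt ρ (ρ' t) t) (ht : t ≠ 0) :
    HasDerivAt (fun s => ρ s / s ^ n) (ρ' t / t ^ n - n * ρ t / t ^ (n + 1)) t := by
  refine (hρ.div (hasDerivAt_pow n t) (pow_ne_zero n ht)).congr_deriv ?_
  rcases n with _ | n
  · simp
  · simp only [Nat.add_sub_cancel]
    field_simp
    ring

lemma radial_mul_udelta2 (μ : ℝ) (F : Fin 2 → ℝ) (j : Fin 2) :
    (fun z => ρ (eunorm z) * udelta2 μ F z j) =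
      radialStokesField (fun t => -(ρ t * log t) / (4 * π * μ))
        (fun t => ρ t / t ^ 2 / (4 * π * μ)) F j := by
  ext z
  simp only [udelta2, radialStokesField]
  ring

lemma radial_mul_pdelta2 (F : Fin 2 → ℝ) :
    (fun z => ρ (eunorm z) * pdelta2 F z) =
      fun z => (fun t => ρ t / t ^ 2 / (2 * π)) (eunorm z) * dot z F := by
  ext z
  simp only [pdelta2]
  ring

theorem stokes_radial_mul_stokeslet2d (hρ : ∀ t > 0, HasDerivAt ρ (ρ' t) t)
    (hρ' : ∀ t > 0, HasDerivAt ρ' (ρ'' t) t) {μ : ℝ} (hμ : μ ≠ 0) (F : Fin 2 → ℝ) (j : Fin 2)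
    {y : Fin 2 → ℝ} (hy : y ≠ 0) :
    -μ * lap (fun z => ρ (eunorm z) * udelta2 μ F z j) y +
        pd j (fun z => ρ (eunorm z) * pdelta2 F z) y =
      (((ρ'' (eunorm y) + ρ' (eunorm y) / eunorm y) * log (eunorm y)
          + 2 * ρ' (eunorm y) / eunorm y) * F j
        - (ρ'' (eunorm y) - ρ' (eunorm y) / eunorm y) / eunorm y ^ 2 * (dot y F * y j))
        / (4 * π) := by
  have hφ : ∀ t > 0, HasDerivAt (fun t => -(ρ t * log t) / (4 * π * μ))
      (-(ρ' t * log t + ρ t / t) / (4 * π * μ)) t := fun t ht =>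
    (hasDerivAt_mul_log (hρ t ht) ht.ne').neg.div_const _
  have hφ' : ∀ t > 0, HasDerivAt (fun t => -(ρ' t * log t + ρ t / t) / (4 * π * μ))
      (-(ρ'' t * log t + 2 * ρ' t / t - ρ t / t ^ 2) / (4 * π * μ)) t := fun t ht =>
    (((hasDerivAt_mul_log (hρ' t ht) ht.ne').add
      (by simpa using hasDerivAt_div_pow 1 (hρ t ht) ht.ne')).neg.div_const _).congr_deriv
      (by ring)
  have hψ : ∀ t > 0, HasDerivAt (fun t => ρ t / t ^ 2 / (4 * π * μ))
      ((ρ' t / t ^ 2 - 2 * (ρ t / t ^ 3)) / (4 * π * μ)) t := fun t ht =>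
    ((hasDerivAt_div_pow 2 (hρ t ht) ht.ne').div_const _).congr_deriv (by push_cast; ring)
  have hψ' : ∀ t > 0, HasDerivAt (fun t => (ρ' t / t ^ 2 - 2 * (ρ t / t ^ 3)) / (4 * π * μ))
      ((ρ'' t / t ^ 2 - 4 * ρ' t / t ^ 3 + 6 * ρ t / t ^ 4) / (4 * π * μ)) t := fun t ht =>
    (((hasDerivAt_div_pow 2 (hρ' t ht) ht.ne').sub
      ((hasDerivAt_div_pow 3 (hρ t ht) ht.ne').const_mul 2)).div_const _).congr_deriv
      (by push_cast; ring)
  have hr : 0 < eunorm y := eunorm_pos hy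
  rw [radial_mul_udelta2, radial_mul_pdelta2, lap_radialStokesField F j hφ hφ' hψ hψ' hy,
    pd_radial_mul j ((hasDerivAt_div_pow 2 (hρ _ hr) hr.ne').div_const _)
      (differentiable_dot F y) hy, pd_dot]
  field_simp
  ring

end TruncatedStokeslet

section Cutoff

def cutoffCubic (a b t : ℝ) : ℝ :=
  (2 * t ^ 3 - 3 * (a + b) * t ^ 2 + 6 * a * b * t + b ^ 2 * (b - 3 * a)) / (b - a) ^ 3

lemma cutoff_eq_cutoffCubic {a b t : ℝ} (hat : a < t) (htb : t ≤ b) :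
    cutoff a b t = cutoffCubic a b t := by
  rw [cutoff, if_neg hat.not_ge, if_pos htb, cutoffCubic]

lemma hasDerivAt_cutoffCubic (a b t : ℝ) :
    HasDerivAt (cutoffCubic a b) (6 * (t - a) * (t - b) / (b - a) ^ 3) t := by
  have h := ((((hasDerivAt_pow 3 t).const_mul 2).sub
    ((hasDerivAt_pow 2 t).const_mul (3 * (a + b)))).add
    ((hasDerivAt_id t).const_mul (6 * a * b))).add_const (b ^ 2 * (b - 3 * a))
  exact (h.div_const ((b - a) ^ 3)).congr_deriv (by simp; ring)

lemma hasDerivAt_cutoffCubic_deriv (a b t : ℝ) :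
    HasDerivAt (fun t => 6 * (t - a) * (t - b) / (b - a) ^ 3)
      (6 * (2 * t - a - b) / (b - a) ^ 3) t := by
  have h := (((hasDerivAt_id t).sub_const a).const_mul 6).mul ((hasDerivAt_id t).sub_const b)
  exact (h.div_const ((b - a) ^ 3)).congr_deriv (by simp; ring)

end Cutoff

theorem stokes_truncated_stokeslet2d_general (μ : ℝ) (hμ : 0 < μ) (F : Fin 2 → ℝ)
    (a b : ℝ) (ha : 0 < a)
    (x : Fin 2 → ℝ) (hxa : a < eunorm x) (hxb : eunorm x < b) :
    ∀ j : Fin 2,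
      -μ * lap (fun y => cutoff a b (eunorm y) * udelta2 μ F y j) x +
        pd j (fun y => cutoff a b (eunorm y) * pdelta2 F y) x =
      (3 / (2 * π * (b - a) ^ 3 * eunorm x)) *
        (((3 * (eunorm x) ^ 2 - 2 * (a + b) * eunorm x + a * b) * Real.log (eunorm x)
            + 2 * (eunorm x) ^ 2 - 2 * (a + b) * eunorm x + 2 * a * b) * F j
          + (a * b - (eunorm x) ^ 2) * (dot x F / (eunorm x) ^ 2) * x j) := by
  intro j
  have hx : x ≠ 0 := by
    rintro rfl
    simp [eunorm] at hxa
    linarith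
  have hcut : ∀ᶠ y in 𝓝 x, cutoff a b (eunorm y) = cutoffCubic a b (eunorm y) := by
    filter_upwards [(isOpen_Ioo.preimage continuous_eunorm).mem_nhds ⟨hxa, hxb⟩] with y hy
    exact cutoff_eq_cutoffCubic hy.1 hy.2.le
  rw [lap_congr (hcut.mono fun y hy => congrArg (· * udelta2 μ F y j) hy),
    pd_congr j (hcut.mono fun y hy => congrArg (· * pdelta2 F y) hy),
    stokes_radial_mul_stokeslet2d (fun t _ => hasDerivAt_cutoffCubic a b t)
      (fun t _ => hasDerivAt_cutoffCubic_deriv a b t) hμ.ne' F j hx]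
  have hr : eunorm x ≠ 0 := (eunorm_pos hx).ne'
  field_simp
  ring

/-- The Stokes operator applied to the truncated 2D Stokeslet `(χ̃ u_δ, χ̃ p_δ)` on the
annulus `a < |x| < b` gives the explicit function `g`. -/
theorem stokes_truncated_stokeslet2d (μ : ℝ) (hμ : 0 < μ) (F : Fin 2 → ℝ)
    (a b : ℝ) (ha : 0 < a) (hab : a < b)
    (x : Fin 2 → ℝ) (hxa : a < eunorm x) (hxb : eunorm x < b) :
    ∀ j : Fin 2,
      -μ * lap (fun y => cutoff a b (eunorm y) * udelta2 μ F y j) x +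
        pd j (fun y => cutoff a b (eunorm y) * pdelta2 F y) x =
      (3 / (2 * π * (b - a) ^ 3 * eunorm x)) *
        (((3 * (eunorm x) ^ 2 - 2 * (a + b) * eunorm x + a * b) * Real.log (eunorm x)
            + 2 * (eunorm x) ^ 2 - 2 * (a + b) * eunorm x + 2 * a * b) * F j
          + (a * b - (eunorm x) ^ 2) * (dot x F / (eunorm x) ^ 2) * x j) :=
  stokes_truncated_stokeslet2d_general μ hμ F a b ha x hxa hxb
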